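/- arXiv:1108.1997 — 2 statements merged into one kernel-verified Lean document; each statement's English description precedes it below -/
import Mathlib

section
/- Let f : ℂ² → ℂ (or ℝ² → ℝ) be smooth. Define on the 3-dimensional space spanned by ∂_t, ∂_x, ∂_y a commutative multiplication by: ∂_t is the unity, ∂_x·∂_x = f_{xxy}∂_t + f_{xxx}∂_x + ∂_y, ∂_x·∂_y = f_{xyy}∂_t + f_{xxy}∂_x, ∂_y·∂_y = f_{yyy}∂_t + f_{xyy}∂_x. Then this multiplication is associative at a point if and only if f satisfies f_{yyy} = f_{xxy}² − f_{xxx}f_{xyy} at that point. -/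
/-- Partial derivative in the x-direction. -/
noncomputable def dX (g : (ℝ × ℝ) → ℝ) : (ℝ × ℝ) → ℝ := fun p => fderiv ℝ g p (1, 0)
/-- Partial derivative in the y-direction. -/
noncomputable def dY (g : (ℝ × ℝ) → ℝ) : (ℝ × ℝ) → ℝ := fun p => fderiv ℝ g p (0, 1)

/-- The commutative bilinear multiplication on span(∂_t, ∂_x, ∂_y) ≅ ℝ³ with ∂_t the unity,
∂_x·∂_x = f_xxy ∂_t + f_xxx ∂_x + ∂_y, ∂_x·∂_y = f_xyy ∂_t + f_xxy ∂_x,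
∂_y·∂_y = f_yyy ∂_t + f_xyy ∂_x, at the point p. Coordinates are (t, x, y). -/
noncomputable def mulPoly (f : (ℝ × ℝ) → ℝ) (p : ℝ × ℝ) (u v : ℝ × ℝ × ℝ) : ℝ × ℝ × ℝ :=
  (u.1 * v.1 + dY (dX (dX f)) p * (u.2.1 * v.2.1)
      + dY (dY (dX f)) p * (u.2.1 * v.2.2 + u.2.2 * v.2.1)
      + dY (dY (dY f)) p * (u.2.2 * v.2.2),
    u.1 * v.2.1 + u.2.1 * v.1 + dX (dX (dX f)) p * (u.2.1 * v.2.1)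
      + dY (dX (dX f)) p * (u.2.1 * v.2.2 + u.2.2 * v.2.1)
      + dY (dY (dX f)) p * (u.2.2 * v.2.2),
    u.1 * v.2.2 + u.2.2 * v.1 + u.2.1 * v.2.1)

/-- The multiplication is associative at p iff f_yyy = f_xxy² − f_xxx f_xyy at p. -/
theorem stmt5 (f : (ℝ × ℝ) → ℝ) (hf : ContDiff ℝ (⊤ : ℕ∞) f) (p : ℝ × ℝ) :
    (∀ u v w : ℝ × ℝ × ℝ, mulPoly f p (mulPoly f p u v) w = mulPoly f p u (mulPoly f p v w))
      ↔ dY (dY (dY f)) p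
          = (dY (dX (dX f)) p) ^ 2 - dX (dX (dX f)) p * dY (dY (dX f)) p := by
  constructor
  · intro h
    have h1 := congrArg Prod.fst (h (0,1,0) (0,1,0) (0,0,1))
    simp only [mulPoly] at h1
    nlinarith [h1]
  · intro h u v w
    simp only [mulPoly, Prod.mk.injEq, h]
    refine ⟨by ring, by ring, by ring⟩
end

section
/- Let f : ℂ² → ℂ be smooth. Define on the span of ∂_t, ∂_x, ∂_y a commutative multiplication with ∂_t as unity, ∂_x·∂_x = f_{xxy}∂_x + f_{xxx}∂_y, ∂_x·∂_y = ∂_t + f_{xyy}∂_x + f_{xxy}∂_y, ∂_y·∂_y = f_{yyy}∂_x + f_{xyy}∂_y. Then this multiplication is associative if and only if f_{xxx}f_{yyy} − f_{xxy}f_{xyy} = 1. -/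
/-- The commutative bilinear multiplication on span(∂_t, ∂_x, ∂_y) ≅ ℝ³ with ∂_t the unity,
∂_x·∂_x = f_xxy ∂_x + f_xxx ∂_y, ∂_x·∂_y = ∂_t + f_xyy ∂_x + f_xxy ∂_y,
∂_y·∂_y = f_yyy ∂_x + f_xyy ∂_y, at the point p. Coordinates are (t, x, y). -/
noncomputable def mulDet (f : (ℝ × ℝ) → ℝ) (p : ℝ × ℝ) (u v : ℝ × ℝ × ℝ) : ℝ × ℝ × ℝ :=
  (u.1 * v.1 + (u.2.1 * v.2.2 + u.2.2 * v.2.1),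
    u.1 * v.2.1 + u.2.1 * v.1 + dY (dX (dX f)) p * (u.2.1 * v.2.1)
      + dY (dY (dX f)) p * (u.2.1 * v.2.2 + u.2.2 * v.2.1)
      + dY (dY (dY f)) p * (u.2.2 * v.2.2),
    u.1 * v.2.2 + u.2.2 * v.1 + dX (dX (dX f)) p * (u.2.1 * v.2.1)
      + dY (dX (dX f)) p * (u.2.1 * v.2.2 + u.2.2 * v.2.1)
      + dY (dY (dX f)) p * (u.2.2 * v.2.2))

/-- The multiplication is associative at p iff f_xxx f_yyy − f_xxy f_xyy = 1 at p. -/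
theorem stmt6 (f : (ℝ × ℝ) → ℝ) (hf : ContDiff ℝ ⊤ f) (p : ℝ × ℝ) :
    (∀ u v w : ℝ × ℝ × ℝ, mulDet f p (mulDet f p u v) w = mulDet f p u (mulDet f p v w))
      ↔ dX (dX (dX f)) p * dY (dY (dY f)) p
          - dY (dX (dX f)) p * dY (dY (dX f)) p = 1 := by
  constructor
  · intro h
    have := congrArg (fun z : ℝ × ℝ × ℝ => z.2.1)
      (h (0, 1, 0) (0, 1, 0) (0, 0, 1))
    simp only [mulDet] at this
    linarith [this]
  · intro h u v w
    obtain ⟨u1, u2, u3⟩ := u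
    obtain ⟨v1, v2, v3⟩ := v
    obtain ⟨w1, w2, w3⟩ := w
    simp only [mulDet, Prod.mk.injEq]
    refine ⟨by ring, ?_, ?_⟩
    · linear_combination (u2 * v2 * w3 - u3 * v2 * w2) * h
    · linear_combination (u3 * v3 * w2 - u2 * v3 * w3) * h
end
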